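/- arXiv:1609.06652 — 2 statements merged into one kernel-verified Lean document; each statement's English description precedes it below -/
import Mathlib

section
/- For the system p = t D (A p + σ) with D = diag(1/γ_k), A entrywise nonnegative with zero diagonal, and σ > 0 componentwise: a strictly positive solution p exists if and only if t · ρ(D A) < 1, where ρ denotes the spectral radius; in that case the solution is unique and given by p = t (I − t D A)^{-1} D σ. -/
open Matrix
open scoped ENNReal NNReal

section Aux

attribute [local instance] Matrix.linftyOpNormedRing Matrix.linftyOpNormedAlgebra
  Matrix.linftyOpNormedAddCommGroup

private def matComplete (n : ℕ) : CompleteSpace (Matrix (Fin n) (Fin n) ℂ) :=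
  FiniteDimensional.complete ℂ (Matrix (Fin n) (Fin n) ℂ)

attribute [local instance] matComplete

variable {n : ℕ}

private lemma entry_nnnorm_le (X : Matrix (Fin n) (Fin n) ℂ) (i j : Fin n) :
    ‖X i j‖₊ ≤ ‖X‖₊ := by
  rw [Matrix.linfty_opNNNorm_def]
  exact le_trans (Finset.single_le_sum (f := fun l => ‖X i l‖₊)
    (fun l _ => zero_le) (Finset.mem_univ j))
    (Finset.le_sup (f := fun i => ∑ j, ‖X i j‖₊) (Finset.mem_univ i))

private lemma entry_abs_le (X : Matrix (Fin n) (Fin n) ℝ) (i j : Fin n) :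
    |X i j| ≤ ‖X.map Complex.ofReal‖ := by
  have h := entry_nnnorm_le (X.map Complex.ofReal) i j
  have : ‖(X.map Complex.ofReal) i j‖ ≤ ‖X.map Complex.ofReal‖ := h
  simpa [Matrix.map_apply, Complex.norm_real, Real.norm_eq_abs] using this

private lemma exists_eigvec {X : Matrix (Fin n) (Fin n) ℂ} {μ : ℂ}
    (h : μ ∈ spectrum ℂ X) : ∃ v : Fin n → ℂ, v ≠ 0 ∧ X.mulVec v = μ • v := by
  rw [spectrum.mem_iff, Matrix.isUnit_iff_isUnit_det, isUnit_iff_ne_zero, not_not] at h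
  obtain ⟨v, hv, hv0⟩ := (Matrix.exists_mulVec_eq_zero_iff).2 h
  refine ⟨v, hv, ?_⟩
  have halg : (algebraMap ℂ (Matrix (Fin n) (Fin n) ℂ)) μ = μ • (1 : Matrix (Fin n) (Fin n) ℂ) := by
    rw [Algebra.algebraMap_eq_smul_one]
  rw [halg, Matrix.sub_mulVec, Matrix.smul_mulVec, Matrix.one_mulVec, sub_eq_zero] at hv0
  exact hv0.symm

/-- If `M ≥ 0` and `M p < p` componentwise for some positive `p`, then `ρ(M) < 1`. -/
private lemma radius_lt_one (hn : 0 < n) {M : Matrix (Fin n) (Fin n) ℝ}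
    (hM : ∀ i j, 0 ≤ M i j) {p : Fin n → ℝ} (hp : ∀ k, 0 < p k)
    (h : ∀ k, M.mulVec p k < p k) :
    spectralRadius ℂ (M.map Complex.ofReal) < 1 := by
  haveI : Nonempty (Fin n) := Fin.pos_iff_nonempty.mp hn
  set r : ℝ := Finset.univ.sup' Finset.univ_nonempty (fun k => M.mulVec p k / p k) with hr
  have hr1 : r < 1 := by
    rw [Finset.sup'_lt_iff]
    exact fun k _ => (div_lt_one (hp k)).2 (h k)
  have hMp0 : ∀ k, 0 ≤ M.mulVec p k := by
    intro k
    simp only [Matrix.mulVec, dotProduct]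
    exact Finset.sum_nonneg fun j _ => mul_nonneg (hM k j) (hp j).le
  obtain ⟨k0⟩ := (inferInstance : Nonempty (Fin n))
  have hr0 : 0 ≤ r := le_trans (div_nonneg (hMp0 k0) (hp k0).le)
    (Finset.le_sup' (fun k => M.mulVec p k / p k) (Finset.mem_univ k0))
  have key : ∀ μ ∈ spectrum ℂ (M.map Complex.ofReal), ‖μ‖ ≤ r := by
    intro μ hμ
    obtain ⟨v, hv, hvec⟩ := exists_eigvec hμ
    obtain ⟨k, -, hkmax⟩ := Finset.exists_max_image Finset.univ
      (fun k => ‖v k‖ / p k) Finset.univ_nonempty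
    have hvk : 0 < ‖v k‖ := by
      by_contra hc
      push_neg at hc
      have hvk0 : ‖v k‖ = 0 := le_antisymm hc (norm_nonneg _)
      apply hv
      funext j
      have hthis := hkmax j (Finset.mem_univ j)
      rw [hvk0, zero_div] at hthis
      have h3 : ‖v j‖ ≤ 0 := by
        have h4 := mul_le_mul_of_nonneg_right hthis (hp j).le
        rw [zero_mul, div_mul_cancel₀ _ (hp j).ne'] at h4
        exact h4
      simpa using le_antisymm h3 (norm_nonneg _)
    have h1 : ‖μ‖ * ‖v k‖ = ‖(M.map Complex.ofReal).mulVec v k‖ := by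
      rw [hvec]
      simp [norm_smul]
    have h2 : ‖(M.map Complex.ofReal).mulVec v k‖ ≤ ∑ j, M k j * ‖v j‖ := by
      simp only [Matrix.mulVec, dotProduct]
      refine le_trans (norm_sum_le _ _) (le_of_eq ?_)
      refine Finset.sum_congr rfl fun j _ => ?_
      rw [Matrix.map_apply, norm_mul, Complex.norm_real, Real.norm_eq_abs,
        abs_of_nonneg (hM k j)]
    have h3 : ∑ j, M k j * ‖v j‖ ≤ (‖v k‖ / p k) * M.mulVec p k := by
      simp only [Matrix.mulVec, dotProduct, Finset.mul_sum]
      refine Finset.sum_le_sum fun j _ => ?_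
      have hj : ‖v j‖ ≤ (‖v k‖ / p k) * p j := by
        have := hkmax j (Finset.mem_univ j)
        rw [div_le_div_iff₀ (hp j) (hp k)] at this
        rw [div_mul_eq_mul_div, le_div_iff₀ (hp k)]
        linarith
      calc M k j * ‖v j‖ ≤ M k j * ((‖v k‖ / p k) * p j) :=
            mul_le_mul_of_nonneg_left hj (hM k j)
        _ = ‖v k‖ / p k * (M k j * p j) := by ring
    have h4 : M.mulVec p k ≤ r * p k := by
      rw [← div_le_iff₀ (hp k)]
      exact Finset.le_sup' (fun k => M.mulVec p k / p k) (Finset.mem_univ k)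
    have : ‖μ‖ * ‖v k‖ ≤ r * ‖v k‖ := by
      calc ‖μ‖ * ‖v k‖ ≤ (‖v k‖ / p k) * M.mulVec p k := h1.le.trans (h2.trans h3)
        _ ≤ (‖v k‖ / p k) * (r * p k) :=
            mul_le_mul_of_nonneg_left h4 (div_nonneg (norm_nonneg _) (hp k).le)
        _ = r * (‖v k‖ / p k * p k) := by ring
        _ = r * ‖v k‖ := by rw [div_mul_cancel₀ _ (hp k).ne']
    exact le_of_mul_le_mul_right this hvk
  have hle : spectralRadius ℂ (M.map Complex.ofReal) ≤ ENNReal.ofReal r := by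
    refine iSup₂_le fun μ hμ => ?_
    rw [← ENNReal.ofReal_coe_nnreal, coe_nnnorm]
    exact ENNReal.ofReal_le_ofReal (key μ hμ)
  calc spectralRadius ℂ (M.map Complex.ofReal) ≤ ENNReal.ofReal r := hle
    _ < 1 := by
        rw [← ENNReal.ofReal_one]
        exact (ENNReal.ofReal_lt_ofReal_iff one_pos).2 hr1

private lemma radius_smul (c : ℝ) (hc : 0 < c) (X : Matrix (Fin n) (Fin n) ℂ) :
    spectralRadius ℂ ((c : ℂ) • X) = ENNReal.ofReal c * spectralRadius ℂ X := by
  have hc' : (c : ℂ) ≠ 0 := Complex.ofReal_ne_zero.2 hc.ne'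
  have hspec := spectrum.unit_smul_eq_smul X (Units.mk0 (c : ℂ) hc')
  have hsmul : (Units.mk0 (c : ℂ) hc') • X = (c : ℂ) • X := rfl
  rw [hsmul] at hspec
  have himg : spectrum ℂ ((c : ℂ) • X) = (fun z => (c : ℂ) * z) '' spectrum ℂ X := by
    rw [hspec]
    ext z
    simp [Set.mem_smul_set, Units.smul_def]
  show (⨆ μ ∈ spectrum ℂ ((c:ℂ) • X), (‖μ‖₊ : ℝ≥0∞)) =
    ENNReal.ofReal c * ⨆ μ ∈ spectrum ℂ X, (‖μ‖₊ : ℝ≥0∞)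
  rw [himg, iSup_image]
  simp_rw [ENNReal.mul_iSup]
  refine iSup_congr fun μ => iSup_congr fun _ => ?_
  rw [nnnorm_mul, ENNReal.coe_mul]
  congr 1
  rw [Complex.nnnorm_real, ← ENNReal.ofReal_coe_nnreal, coe_nnnorm, Real.norm_of_nonneg hc.le]

private lemma exists_pow_small {X : Matrix (Fin n) (Fin n) ℂ}
    (h : spectralRadius ℂ X < 1) : ∃ m : ℕ, 0 < m ∧ ‖X ^ m‖ < 1 := by
  have htend := spectrum.pow_nnnorm_pow_one_div_tendsto_nhds_spectralRadius X
  have hev : ∀ᶠ N : ℕ in Filter.atTop,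
      ((‖X ^ N‖₊ : ℝ≥0∞) ^ (1 / (N : ℝ))) < 1 :=
    htend.eventually_lt_const h
  obtain ⟨N, hN, hN1⟩ := (hev.and (Filter.eventually_ge_atTop 1)).exists
  refine ⟨N, hN1, ?_⟩
  by_contra hge
  push_neg at hge
  have h1 : (1 : ℝ≥0∞) ≤ (‖X ^ N‖₊ : ℝ≥0∞) := by
    rw [← ENNReal.ofReal_one]
    rw [← ENNReal.ofReal_coe_nnreal, coe_nnnorm]
    exact ENNReal.ofReal_le_ofReal hge
  have : (1 : ℝ≥0∞) ≤ (‖X ^ N‖₊ : ℝ≥0∞) ^ (1 / (N : ℝ)) := by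
    calc (1 : ℝ≥0∞) = 1 ^ (1 / (N : ℝ)) := (ENNReal.one_rpow _).symm
      _ ≤ (‖X ^ N‖₊ : ℝ≥0∞) ^ (1 / (N : ℝ)) :=
          ENNReal.rpow_le_rpow h1 (by positivity)
  exact absurd hN (not_lt.2 this)

private lemma pow_entry_nonneg {M : Matrix (Fin n) (Fin n) ℝ}
    (hM : ∀ i j, 0 ≤ M i j) : ∀ m : ℕ, ∀ i j, 0 ≤ (M ^ m) i j := by
  intro m
  induction m with
  | zero => intro i j; by_cases h : i = j <;> simp [h, Matrix.one_apply]
  | succ m ih =>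
      intro i j
      rw [pow_succ, Matrix.mul_apply]
      exact Finset.sum_nonneg fun l _ => mul_nonneg (ih i l) (hM l j)

/-- key invertibility and nonnegativity of the inverse. -/
private lemma inv_props (hn : 0 < n) {M : Matrix (Fin n) (Fin n) ℝ}
    (hM : ∀ i j, 0 ≤ M i j)
    (h : spectralRadius ℂ (M.map Complex.ofReal) < 1) :
    IsUnit (1 - M).det ∧ ∀ i j, 0 ≤ (1 - M)⁻¹ i j := by
  haveI : Nonempty (Fin n) := Fin.pos_iff_nonempty.mp hn
  set φ := (Complex.ofRealHom.mapMatrix :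
    Matrix (Fin n) (Fin n) ℝ →+* Matrix (Fin n) (Fin n) ℂ) with hφ
  have hφeq : ∀ X : Matrix (Fin n) (Fin n) ℝ, φ X = X.map Complex.ofReal := fun X =>
    RingHom.mapMatrix_apply _ _
  -- 1 is not in the spectrum
  have h1spec : (1 : ℂ) ∉ spectrum ℂ (M.map Complex.ofReal) := by
    intro hmem
    have : (‖(1 : ℂ)‖₊ : ℝ≥0∞) ≤ spectralRadius ℂ (M.map Complex.ofReal) :=
      le_iSup₂ (f := fun μ (_ : μ ∈ spectrum ℂ (M.map Complex.ofReal)) => (‖μ‖₊ : ℝ≥0∞)) 1 hmem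
    simp only [nnnorm_one, ENNReal.coe_one] at this
    exact absurd h (not_lt.2 this)
    -- contradiction with h
  have hUnitC : IsUnit ((1 : Matrix (Fin n) (Fin n) ℂ) - M.map Complex.ofReal) := by
    have := spectrum.notMem_iff.mp h1spec
    rwa [_root_.map_one] at this
  have hdetC : ((1 : Matrix (Fin n) (Fin n) ℂ) - M.map Complex.ofReal).det ≠ 0 :=
    isUnit_iff_ne_zero.mp ((Matrix.isUnit_iff_isUnit_det _).mp hUnitC)
  have hmapsub : (1 : Matrix (Fin n) (Fin n) ℂ) - M.map Complex.ofReal = φ (1 - M) := by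
    rw [_root_.map_sub, _root_.map_one, hφeq]
  have hdet : IsUnit (1 - M).det := by
    rw [isUnit_iff_ne_zero]
    intro h0
    apply hdetC
    rw [hmapsub, ← RingHom.map_det, h0]
    simp
  refine ⟨hdet, ?_⟩
  -- nonnegativity of the inverse
  obtain ⟨m, hm, hθ⟩ := exists_pow_small h
  set θ : ℝ := ‖(M.map Complex.ofReal) ^ m‖ with hθdef
  have hθ0 : 0 ≤ θ := norm_nonneg _
  set B := (1 - M)⁻¹ with hB
  have hBmul : B * (1 - M) = 1 := Matrix.nonsing_inv_mul _ hdet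
  intro i j
  set C : ℝ := ‖(B.map Complex.ofReal)‖ with hC
  have hbound : ∀ k : ℕ, -(C * θ ^ k) ≤ B i j := by
    intro k
    -- B = (∑ i < m*k, M^i) + B * M^(m*k)
    have hgeom : (1 - M) * (∑ i ∈ Finset.range (m * k), M ^ i) = 1 - M ^ (m * k) := by
      have := mul_geom_sum M (m * k)
      calc (1 - M) * ∑ i ∈ Finset.range (m * k), M ^ i
          = -((M - 1) * ∑ i ∈ Finset.range (m * k), M ^ i) := by
            rw [← neg_sub M 1, neg_mul]
        _ = -(M ^ (m * k) - 1) := by rw [this]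
        _ = 1 - M ^ (m * k) := by rw [neg_sub]
    have hBsplit : B = (∑ i ∈ Finset.range (m * k), M ^ i) + B * M ^ (m * k) := by
      have : B * ((1 - M) * (∑ i ∈ Finset.range (m * k), M ^ i)) =
          ∑ i ∈ Finset.range (m * k), M ^ i := by
        rw [← mul_assoc, hBmul, one_mul]
      rw [hgeom] at this
      have h2 : B * 1 - B * M ^ (m * k) = ∑ i ∈ Finset.range (m * k), M ^ i := by
        rw [← mul_sub]; exact this
      rw [mul_one] at h2
      rw [← h2]
      abel
    have hS : 0 ≤ (∑ i ∈ Finset.range (m * k), M ^ i) i j := by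
      rw [Matrix.sum_apply]
      exact Finset.sum_nonneg fun l _ => pow_entry_nonneg hM l i j
    have hE : |(B * M ^ (m * k)) i j| ≤ C * θ ^ k := by
      calc |(B * M ^ (m * k)) i j| ≤ ‖((B * M ^ (m * k)).map Complex.ofReal)‖ :=
            entry_abs_le _ i j
        _ = ‖(B.map Complex.ofReal) * ((M.map Complex.ofReal) ^ m) ^ k‖ := by
            rw [← hφeq, ← hφeq, _root_.map_mul, _root_.map_pow]
            simp only [hφeq]
            rw [← pow_mul]
        _ ≤ ‖(B.map Complex.ofReal)‖ * ‖((M.map Complex.ofReal) ^ m) ^ k‖ :=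
            norm_mul_le _ _
        _ ≤ C * θ ^ k := by
            refine mul_le_mul_of_nonneg_left ?_ (norm_nonneg _)
            exact norm_pow_le _ k
    have := hBsplit
    have hBij : B i j = (∑ i ∈ Finset.range (m * k), M ^ i) i j + (B * M ^ (m * k)) i j := by
      rw [← Matrix.add_apply, ← hBsplit]
    rw [hBij]
    have := abs_le.mp hE
    linarith [this.1]
  have htendsto : Filter.Tendsto (fun k : ℕ => -(C * θ ^ k)) Filter.atTop (nhds 0) := by
    have := (tendsto_pow_atTop_nhds_zero_of_lt_one hθ0 hθ).const_mul C
    simpa using this.neg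
  have := le_of_tendsto htendsto (Filter.Eventually.of_forall hbound)
  linarith

end Aux

/-- For the system `p = t D (A p + σ)` with `D = diag(1/γ_k)`, `A ≥ 0` with zero
diagonal, `σ > 0`: a strictly positive solution exists iff `t · ρ(D A) < 1`, and in
that case the solution is unique and given by `p = t (I − t D A)⁻¹ D σ`. -/
theorem stmt10 {n : ℕ} (hn : 0 < n) (γ σ : Fin n → ℝ) (hγ : ∀ k, 0 < γ k)
    (hσ : ∀ k, 0 < σ k)
    (A : Matrix (Fin n) (Fin n) ℝ) (hA : ∀ k j, 0 ≤ A k j) (hAdiag : ∀ k, A k k = 0)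
    (t : ℝ) (ht : 0 < t) (D : Matrix (Fin n) (Fin n) ℝ)
    (hD : D = diagonal fun k => (γ k)⁻¹) :
    ((∃ p : Fin n → ℝ, (∀ k, 0 < p k) ∧ p = t • (D.mulVec (A.mulVec p + σ)))
        ↔ ENNReal.ofReal t * spectralRadius ℂ ((D * A).map (Complex.ofReal)) < 1) ∧
    (ENNReal.ofReal t * spectralRadius ℂ ((D * A).map (Complex.ofReal)) < 1 →
      ∀ p : Fin n → ℝ, ((∀ k, 0 < p k) ∧ p = t • (D.mulVec (A.mulVec p + σ))) →
        p = t • ((1 - t • (D * A))⁻¹.mulVec (D.mulVec σ))) := by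
  set M : Matrix (Fin n) (Fin n) ℝ := t • (D * A) with hMdef
  have hMent : ∀ i j, 0 ≤ M i j := by
    intro i j
    rw [hMdef, Matrix.smul_apply, hD, Matrix.diagonal_mul, smul_eq_mul]
    have := hγ i
    have := hA i j
    positivity
  have hDσ : ∀ k, 0 < (D.mulVec σ) k := by
    intro k
    rw [hD, Matrix.mulVec_diagonal]
    exact mul_pos (inv_pos.2 (hγ k)) (hσ k)
  set c : Fin n → ℝ := t • D.mulVec σ with hcdef
  have hc : ∀ k, 0 < c k := fun k => mul_pos ht (hDσ k)
  have hform : ∀ p : Fin n → ℝ,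
      t • (D.mulVec (A.mulVec p + σ)) = M.mulVec p + c := by
    intro p
    rw [Matrix.mulVec_add, smul_add, Matrix.mulVec_mulVec, hMdef,
      Matrix.smul_mulVec, hcdef]
  have hMc : M.map Complex.ofReal = (t : ℂ) • ((D * A).map Complex.ofReal) := by
    ext i j
    simp [hMdef, Matrix.map_apply, Matrix.smul_apply, Complex.ofReal_mul]
  have hradeq : spectralRadius ℂ (M.map Complex.ofReal)
      = ENNReal.ofReal t * spectralRadius ℂ ((D * A).map Complex.ofReal) := by
    rw [hMc, radius_smul t ht]
  constructor
  · constructor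
    · rintro ⟨p, hp, hpe⟩
      rw [hform] at hpe
      rw [← hradeq]
      refine radius_lt_one hn hMent hp fun k => ?_
      have : p k = M.mulVec p k + c k := congrFun hpe k
      have := hc k
      linarith
    · intro hρ
      rw [← hradeq] at hρ
      obtain ⟨hdet, hinv⟩ := inv_props hn hMent hρ
      set B : Matrix (Fin n) (Fin n) ℝ := (1 - M)⁻¹ with hBdef
      have hB1 : B * (1 - M) = 1 := Matrix.nonsing_inv_mul _ hdet
      have hB2 : (1 - M) * B = 1 := Matrix.mul_nonsing_inv _ hdet
      refine ⟨B.mulVec c, ?_, ?_⟩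
      · -- positivity
        intro k
        have hBM : B = 1 + B * M := by
          have h1 : B - B * M = 1 := by
            have h2 := hB1
            rw [mul_sub, mul_one] at h2
            exact h2
          rw [← h1]; abel
        have : B.mulVec c k = c k + (B * M).mulVec c k := by
          conv_lhs => rw [hBM]
          rw [Matrix.add_mulVec, Matrix.one_mulVec, Pi.add_apply]
        rw [this]
        have hnn : 0 ≤ (B * M).mulVec c k := by
          simp only [Matrix.mulVec, dotProduct]
          refine Finset.sum_nonneg fun j _ => mul_nonneg ?_ (hc j).le
          rw [Matrix.mul_apply]
          exact Finset.sum_nonneg fun l _ => mul_nonneg (hinv k l) (hMent l j)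
        linarith [hc k]
      · -- satisfies the equation
        rw [hform]
        have hMB : M * B + 1 = B := by
          have h1 : B - M * B = 1 := by
            have h2 := hB2
            rw [sub_mul, one_mul] at h2
            exact h2
          rw [← h1]; abel
        rw [Matrix.mulVec_mulVec]
        conv_lhs => rw [← hMB]
        rw [Matrix.add_mulVec, Matrix.one_mulVec]
  · intro hρ p hpair
    obtain ⟨hp, hpe⟩ := hpair
    rw [← hradeq] at hρ
    obtain ⟨hdet, hinv⟩ := inv_props hn hMent hρ
    rw [hform] at hpe
    set B : Matrix (Fin n) (Fin n) ℝ := (1 - M)⁻¹ with hBdef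
    have hB1 : B * (1 - M) = 1 := Matrix.nonsing_inv_mul _ hdet
    have hsub : (1 - M).mulVec p = c := by
      rw [Matrix.sub_mulVec, Matrix.one_mulVec]
      funext k
      have hk := congrFun hpe k
      simp only [Pi.sub_apply, Pi.add_apply] at hk ⊢
      linarith
    have hpB : p = B.mulVec c := by
      rw [← hsub, Matrix.mulVec_mulVec, hB1, Matrix.one_mulVec]
    rw [hpB, hcdef, Matrix.mulVec_smul]
end

section
/- If a max-min optimal power vector p* > 0 exists for F(p) = min_k SINR_k(p) over {0 < p ≤ ρ·1} with SINR_k(p) = γ_k p_k/(Σ_{j≠k} A_{kj} p_j + σ_k), all σ_k > 0, all γ_k > 0, and the matrix A is irreducible (as a nonnegative matrix with zero diagonal, n ≥ 2), then at p* all SINRs are equal: SINR_k(p*) = F(p*) for every k. -/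
open Finset Matrix

/-- A nonnegative square matrix is irreducible if some power connects every pair of
indices with a strictly positive entry. -/
def MatrixIrreducible {ι : Type*} [Fintype ι] [DecidableEq ι]
    (A : Matrix ι ι ℝ) : Prop :=
  ∀ i j : ι, ∃ m : ℕ, 0 < m ∧ 0 < (A ^ m) i j

lemma aux_pow_nonneg {ι : Type*} [Fintype ι] [DecidableEq ι] (A : Matrix ι ι ℝ)
    (hA : ∀ k j, 0 ≤ A k j) : ∀ m i j, 0 ≤ (A ^ m) i j := by
  intro m
  induction m with
  | zero => intro i j; simp [Matrix.one_apply]; split <;> norm_num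
  | succ m ih =>
      intro i j
      rw [pow_succ, Matrix.mul_apply]
      exact Finset.sum_nonneg fun l _ => mul_nonneg (ih i l) (hA l j)

lemma aux_closed {ι : Type*} [Fintype ι] [DecidableEq ι] (A : Matrix ι ι ℝ)
    (hA : ∀ k j, 0 ≤ A k j) (T : Finset ι)
    (hclosed : ∀ i ∈ T, ∀ j, 0 < A i j → j ∈ T) :
    ∀ m i, i ∈ T → ∀ j, 0 < (A ^ m) i j → j ∈ T := by
  intro m
  induction m with
  | zero =>
      intro i hi j hj
      simp only [pow_zero, Matrix.one_apply] at hj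
      by_cases h : i = j
      · exact h ▸ hi
      · simp [h] at hj
  | succ m ih =>
      intro i hi j hj
      rw [pow_succ, Matrix.mul_apply] at hj
      have : ∃ l ∈ (univ : Finset ι), 0 < (A ^ m) i l * A l j := by
        by_contra h
        push_neg at h
        have : (∑ l, (A ^ m) i l * A l j) ≤ 0 :=
          Finset.sum_nonpos fun l hl => h l hl
        linarith
      obtain ⟨l, -, hl⟩ := this
      rcases mul_pos_iff.mp hl with ⟨h1, h2⟩ | ⟨h1, h2⟩
      · exact hclosed l (ih i hi l h1) j h2
      · exact absurd (hA l j) (not_le.mpr h2)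

lemma aux_edge {ι : Type*} [Fintype ι] [DecidableEq ι] (A : Matrix ι ι ℝ)
    (hA : ∀ k j, 0 ≤ A k j) (hirr : MatrixIrreducible A)
    (T : Finset ι) (i0 : ι) (hi0 : i0 ∈ T) (j0 : ι) (hj0 : j0 ∉ T) :
    ∃ i ∈ T, ∃ j, j ∉ T ∧ 0 < A i j := by
  by_contra h
  push_neg at h
  have hclosed : ∀ i ∈ T, ∀ j, 0 < A i j → j ∈ T := by
    intro i hi j hij
    by_contra hj
    exact absurd (h i hi j hj) (not_le.mpr hij)
  obtain ⟨m, -, hpos⟩ := hirr i0 j0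
  exact hj0 (aux_closed A hA T hclosed m i0 hi0 j0 hpos)

/-- Equalization at the max-min optimum: if the interference matrix `A` is nonnegative,
irreducible with zero diagonal (`n ≥ 2`), then at any max-min optimal power vector
`p*` over `{0 < p ≤ ρ·1}`, all SINRs are equal to the optimal value `F(p*)`. -/
theorem stmt17 {ι : Type*} [Fintype ι] [Nonempty ι] [DecidableEq ι]
    (hcard : 2 ≤ Fintype.card ι)
    (γ σ : ι → ℝ) (hγ : ∀ k, 0 < γ k) (hσ : ∀ k, 0 < σ k)
    (A : Matrix ι ι ℝ) (hA : ∀ k j, 0 ≤ A k j) (hAdiag : ∀ k, A k k = 0)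
    (hirr : MatrixIrreducible A) (ρ : ℝ) (hρ : 0 < ρ)
    (SINR : (ι → ℝ) → ι → ℝ)
    (hSINR : ∀ q k, SINR q k = γ k * q k / ((∑ j ∈ univ.erase k, A k j * q j) + σ k))
    (F : (ι → ℝ) → ℝ)
    (hF : ∀ q, F q = univ.inf' univ_nonempty (SINR q))
    (pstar : ι → ℝ) (hps : ∀ k, 0 < pstar k ∧ pstar k ≤ ρ)
    (hopt : ∀ p : ι → ℝ, (∀ k, 0 < p k ∧ p k ≤ ρ) → F p ≤ F pstar) :
    ∀ k, SINR pstar k = F pstar := by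
  set M := F pstar with hM
  -- denominators are positive on feasible vectors
  have hden : ∀ (p : ι → ℝ), (∀ k, 0 < p k) → ∀ k,
      0 < (∑ j ∈ univ.erase k, A k j * p j) + σ k := by
    intro p hp k
    have : (0:ℝ) ≤ ∑ j ∈ univ.erase k, A k j * p j :=
      Finset.sum_nonneg fun j _ => mul_nonneg (hA k j) (hp j).le
    linarith [hσ k]
  -- SINR is bounded below by F
  have hFle : ∀ (p : ι → ℝ) (k : ι), F p ≤ SINR p k := by
    intro p k
    rw [hF]
    exact Finset.inf'_le _ (mem_univ k)
  -- F is attained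
  have hFmem : ∀ (p : ι → ℝ), ∃ k, SINR p k = F p := by
    intro p
    obtain ⟨k, -, hk⟩ := Finset.exists_mem_eq_inf' (univ_nonempty) (SINR p)
    exact ⟨k, by rw [hF]; exact hk.symm⟩
  -- key descent lemma
  have key : ∀ n : ℕ, ∀ p : ι → ℝ, (∀ k, 0 < p k ∧ p k ≤ ρ) → F p = M →
      (univ.filter (fun k => SINR p k = M)).card ≤ n → ∀ k, SINR p k = M := by
    intro n
    induction n with
    | zero =>
        intro p hp hFp hcard0 k
        obtain ⟨i, hi⟩ := hFmem p
        have : i ∈ univ.filter (fun k => SINR p k = M) := by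
          simp [hi, hFp]
        have := Finset.card_pos.mpr ⟨i, this⟩
        omega
    | succ n ih =>
        intro p hp hFp hcardn
        by_contra hcon
        push_neg at hcon
        obtain ⟨j0, hj0⟩ := hcon
        set T := univ.filter (fun k => SINR p k = M) with hT
        have hj0T : j0 ∉ T := by simp [hT, hj0]
        obtain ⟨i0, hi0⟩ := hFmem p
        have hi0T : i0 ∈ T := by simp [hT, hi0, hFp]
        -- SINR is strictly above M off T
        have hoffT : ∀ k, k ∉ T → M < SINR p k := by
          intro k hk
          have h1 : M ≤ SINR p k := hFp ▸ hFle p k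
          have h2 : SINR p k ≠ M := by simpa [hT] using hk
          exact lt_of_le_of_ne h1 (Ne.symm h2)
        obtain ⟨i, hiT, j, hjT, hAij⟩ := aux_edge A hA hirr T i0 hi0T j0 hj0T
        have hij : i ≠ j := fun h => hjT (h ▸ hiT)
        -- set up the perturbation
        set Dj := (∑ l ∈ univ.erase j, A j l * p l) + σ j with hDj
        have hDjpos : 0 < Dj := hden p (fun k => (hp k).1) j
        have hgap : 0 < SINR p j - M := by linarith [hoffT j hjT]
        set ε := min (p j / 2) ((SINR p j - M) * Dj / (2 * γ j)) with hε
        have hεpos : 0 < ε := by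
          apply lt_min
          · linarith [(hp j).1]
          · exact div_pos (mul_pos hgap hDjpos) (mul_pos two_pos (hγ j))
        have hεlt : ε < p j := lt_of_le_of_lt (min_le_left _ _) (by linarith [(hp j).1])
        set p' := Function.update p j (p j - ε) with hp'
        have hp'j : p' j = p j - ε := Function.update_self j _ p
        have hp'ne : ∀ l, l ≠ j → p' l = p l := fun l hl => Function.update_of_ne hl _ p
        have hp'le : ∀ l, p' l ≤ p l := by
          intro l
          by_cases h : l = j
          · subst h; rw [hp'j]; linarith
          · rw [hp'ne l h]
        have hp'pos : ∀ l, 0 < p' l := by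
          intro l
          by_cases h : l = j
          · subst h; rw [hp'j]; linarith
          · rw [hp'ne l h]; exact (hp l).1
        have hp'feas : ∀ k, 0 < p' k ∧ p' k ≤ ρ := fun k =>
          ⟨hp'pos k, le_trans (hp'le k) (hp k).2⟩
        -- denominators of p'
        have hden'le : ∀ k, (∑ l ∈ univ.erase k, A k l * p' l) + σ k ≤
            (∑ l ∈ univ.erase k, A k l * p l) + σ k := by
          intro k
          have : (∑ l ∈ univ.erase k, A k l * p' l) ≤ ∑ l ∈ univ.erase k, A k l * p l :=
            Finset.sum_le_sum fun l _ => mul_le_mul_of_nonneg_left (hp'le l) (hA k l)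
          linarith
        -- SINR weakly increases at every k ≠ j
        have hmono : ∀ k, k ≠ j → SINR p k ≤ SINR p' k := by
          intro k hk
          rw [hSINR, hSINR, hp'ne k hk]
          exact div_le_div_of_nonneg_left (mul_nonneg (hγ k).le (hp k).1.le)
            (hden p' hp'pos k) (hden'le k)
        -- SINR strictly increases at i
        have hstrict : SINR p i < SINR p' i := by
          rw [hSINR, hSINR, hp'ne i hij]
          apply div_lt_div_of_pos_left (mul_pos (hγ i) (hp i).1) (hden p' hp'pos i)
          have hjmem : j ∈ univ.erase i := by simp [Ne.symm hij]
          have : (∑ l ∈ univ.erase i, A i l * p' l) < ∑ l ∈ univ.erase i, A i l * p l := by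
            apply Finset.sum_lt_sum
            · exact fun l _ => mul_le_mul_of_nonneg_left (hp'le l) (hA i l)
            · exact ⟨j, hjmem, by rw [hp'j]; nlinarith⟩
          linarith
        -- SINR at j stays above M
        have hjstay : M < SINR p' j := by
          have hden'j : (∑ l ∈ univ.erase j, A j l * p' l) + σ j = Dj := by
            rw [hDj]
            congr 1
            exact Finset.sum_congr rfl fun l hl => by
              rw [hp'ne l (Finset.ne_of_mem_erase hl)]
          have hSj : SINR p j = γ j * p j / Dj := by rw [hSINR]
          have hSj' : SINR p' j = γ j * (p j - ε) / Dj := by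
            rw [hSINR, hden'j, hp'j]
          have hεle : ε ≤ (SINR p j - M) * Dj / (2 * γ j) := min_le_right _ _
          have hγj := hγ j
          rw [hSj']
          rw [lt_div_iff₀ hDjpos]
          have hnum : γ j * p j = SINR p j * Dj := by
            rw [hSj, div_mul_cancel₀ _ hDjpos.ne']
          have hγne : γ j ≠ 0 := hγj.ne'
          have h2 : γ j * ε ≤ (SINR p j - M) * Dj / 2 := by
            calc γ j * ε ≤ γ j * ((SINR p j - M) * Dj / (2 * γ j)) :=
                  mul_le_mul_of_nonneg_left hεle hγj.le
              _ = (SINR p j - M) * Dj / 2 := by field_simp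
          nlinarith
        -- F p' = M
        have hFp'ge : M ≤ F p' := by
          rw [hF]
          apply Finset.le_inf'
          intro k _
          by_cases hk : k = j
          · subst hk; linarith
          · by_cases hkT : k ∈ T
            · have : SINR p k = M := by simpa [hT] using hkT
              linarith [hmono k hk]
            · linarith [hoffT k hkT, hmono k hk]
        have hFp' : F p' = M := le_antisymm (hopt p' hp'feas) hFp'ge
        -- new minimizer set is strictly smaller
        have hsub : univ.filter (fun k => SINR p' k = M) ⊆ T.erase i := by
          intro k hk
          have hkM : SINR p' k = M := by simpa using hk
          rw [Finset.mem_erase]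
          constructor
          · intro h
            have hiM : SINR p i = M := by simpa [hT] using hiT
            rw [h] at hkM
            linarith [hstrict]
          · by_contra hkT
            by_cases hkj : k = j
            · subst hkj; linarith [hjstay]
            · linarith [hoffT k hkT, hmono k hkj]
        have hcard' : (univ.filter (fun k => SINR p' k = M)).card ≤ n := by
          have h1 := Finset.card_le_card hsub
          have h2 : (T.erase i).card < T.card := Finset.card_erase_lt_of_mem hiT
          omega
        have := ih p' hp'feas hFp' hcard' i
        linarith [hstrict, (by simpa [hT] using hiT : SINR p i = M)]
  intro k
  exact key (Fintype.card ι) pstar hps rfl (le_trans (Finset.card_filter_le _ _) (by simp)) k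
end
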